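/- For the weight W_μ(n;x) = (√(1-|x|²)+1/n)^{2μ} on the unit ball and the metric d(x,y) = arccos(⟨x,y⟩ + √(1-|x|²)√(1-|y|²)), for all x, y in B^d: W_μ(n;x)/W_μ(n;y) ≤ 2^μ (1 + n·d(x,y))^{2μ}. -/

import Mathlib

/-- The metric `d(x,y) = arccos(⟨x,y⟩ + √(1-|x|²)√(1-|y|²))` on the unit ball. -/
noncomputable def ballMetric {d : ℕ} (x y : EuclideanSpace ℝ (Fin d)) : ℝ :=
  Real.arccos ((inner ℝ x y : ℝ) + Real.sqrt (1 - ‖x‖ ^ 2) * Real.sqrt (1 - ‖y‖ ^ 2))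

/-- The weight `W_μ(n;x) = (√(1-|x|²) + 1/n)^{2μ}`. -/
noncomputable def Wmu {d : ℕ} (μ : ℝ) (n : ℕ) (x : EuclideanSpace ℝ (Fin d)) : ℝ :=
  (Real.sqrt (1 - ‖x‖ ^ 2) + 1 / n) ^ (2 * μ)

/-!
Lift the ball to the upper hemisphere by `x ↦ X = (x, √(1-|x|²))`; then `d(x,y)` is the
angle between `X` and `Y`, i.e. their geodesic distance on the sphere. Since the chord is
shorter than the arc, the last coordinates satisfy
`|√(1-|x|²) - √(1-|y|²)| ≤ |X - Y| ≤ d(x,y)`.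
Hence `√(1-|x|²) + 1/n ≤ (√(1-|y|²) + 1/n)(1 + n d(x,y))`, and raising to the power `2μ`
bounds the ratio of weights by `(1 + n d(x,y))^{2μ} ≤ 2^μ (1 + n d(x,y))^{2μ}`.
-/

open Real
open scoped InnerProductSpace

section InnerProductSpace

variable {E : Type*} [NormedAddCommGroup E] [InnerProductSpace ℝ E] {x y : E}

/-- `‖X - Y‖² = ‖x - y‖² + (√(1-‖x‖²) - √(1-‖y‖²))²` for the lifts `X, Y`. -/
lemma norm_sub_sq_add_sq_sqrt_sub_sqrt (hx : ‖x‖ ≤ 1) (hy : ‖y‖ ≤ 1) :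
    ‖x - y‖ ^ 2 + (√(1 - ‖x‖ ^ 2) - √(1 - ‖y‖ ^ 2)) ^ 2
      = 2 * (1 - (⟪x, y⟫_ℝ + √(1 - ‖x‖ ^ 2) * √(1 - ‖y‖ ^ 2))) := by
  have hx' : √(1 - ‖x‖ ^ 2) ^ 2 = 1 - ‖x‖ ^ 2 := sq_sqrt (by nlinarith [norm_nonneg x])
  have hy' : √(1 - ‖y‖ ^ 2) ^ 2 = 1 - ‖y‖ ^ 2 := sq_sqrt (by nlinarith [norm_nonneg y])
  rw [norm_sub_sq_real]
  linear_combination hx' + hy'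

lemma sq_sqrt_sub_sqrt_le (hx : ‖x‖ ≤ 1) (hy : ‖y‖ ≤ 1) :
    (√(1 - ‖x‖ ^ 2) - √(1 - ‖y‖ ^ 2)) ^ 2
      ≤ 2 * (1 - (⟪x, y⟫_ℝ + √(1 - ‖x‖ ^ 2) * √(1 - ‖y‖ ^ 2))) := by
  rw [← norm_sub_sq_add_sq_sqrt_sub_sqrt hx hy]
  exact le_add_of_nonneg_left (sq_nonneg _)

lemma inner_add_sqrt_mul_sqrt_le_one (hx : ‖x‖ ≤ 1) (hy : ‖y‖ ≤ 1) :
    ⟪x, y⟫_ℝ + √(1 - ‖x‖ ^ 2) * √(1 - ‖y‖ ^ 2) ≤ 1 := by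
  linarith [sq_sqrt_sub_sqrt_le hx hy, sq_nonneg (√(1 - ‖x‖ ^ 2) - √(1 - ‖y‖ ^ 2))]

lemma neg_one_le_inner_add_sqrt_mul_sqrt (hx : ‖x‖ ≤ 1) (hy : ‖y‖ ≤ 1) :
    -1 ≤ ⟪x, y⟫_ℝ + √(1 - ‖x‖ ^ 2) * √(1 - ‖y‖ ^ 2) := by
  have hxy : ‖x‖ * ‖y‖ ≤ 1 := mul_le_one₀ hx (norm_nonneg y) hy
  have hcs := (abs_le.mp (abs_real_inner_le_norm x y)).1
  have hab : 0 ≤ √(1 - ‖x‖ ^ 2) * √(1 - ‖y‖ ^ 2) := by positivity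
  linarith

end InnerProductSpace

lemma two_mul_one_sub_cos_le_sq (θ : ℝ) : 2 * (1 - cos θ) ≤ θ ^ 2 := by
  linarith [one_sub_sq_div_two_le_cos (x := θ)]

section Ball

variable {d : ℕ} {x y : EuclideanSpace ℝ (Fin d)}

lemma ballMetric_nonneg : 0 ≤ ballMetric x y := arccos_nonneg _

lemma one_add_mul_ballMetric_nonneg (n : ℕ) : 0 ≤ 1 + n * ballMetric x y :=
  add_nonneg zero_le_one (mul_nonneg n.cast_nonneg ballMetric_nonneg)

lemma cos_ballMetric (hx : ‖x‖ ≤ 1) (hy : ‖y‖ ≤ 1) :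
    cos (ballMetric x y) = ⟪x, y⟫_ℝ + √(1 - ‖x‖ ^ 2) * √(1 - ‖y‖ ^ 2) :=
  cos_arccos (neg_one_le_inner_add_sqrt_mul_sqrt hx hy) (inner_add_sqrt_mul_sqrt_le_one hx hy)

lemma abs_sqrt_sub_sqrt_le_ballMetric (hx : ‖x‖ ≤ 1) (hy : ‖y‖ ≤ 1) :
    |√(1 - ‖x‖ ^ 2) - √(1 - ‖y‖ ^ 2)| ≤ ballMetric x y := by
  refine abs_le_of_sq_le_sq ?_ ballMetric_nonneg
  calc (√(1 - ‖x‖ ^ 2) - √(1 - ‖y‖ ^ 2)) ^ 2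
      ≤ 2 * (1 - cos (ballMetric x y)) := cos_ballMetric hx hy ▸ sq_sqrt_sub_sqrt_le hx hy
    _ ≤ ballMetric x y ^ 2 := two_mul_one_sub_cos_le_sq _

end Ball

lemma add_one_div_le_mul_one_add_mul {a b θ n : ℝ} (hn : 0 < n) (hb : 0 ≤ b) (hθ : 0 ≤ θ)
    (hab : a - b ≤ θ) : a + 1 / n ≤ (b + 1 / n) * (1 + n * θ) := by
  have hexpand : (b + 1 / n) * (1 + n * θ) = b + 1 / n + θ + n * θ * b := by
    field_simp
    ring
  have : 0 ≤ n * θ * b := by positivity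
  linarith

lemma Wmu_div_Wmu_le {d : ℕ} {μ : ℝ} (hμ : 0 ≤ μ) {n : ℕ} (hn : 0 < n)
    {x y : EuclideanSpace ℝ (Fin d)} (hx : ‖x‖ ≤ 1) (hy : ‖y‖ ≤ 1) :
    Wmu μ n x / Wmu μ n y ≤ (1 + n * ballMetric x y) ^ (2 * μ) := by
  have hn' : (0 : ℝ) < n := Nat.cast_pos.mpr hn
  have hy₀ : 0 < √(1 - ‖y‖ ^ 2) + 1 / n := by positivity
  have hkey := add_one_div_le_mul_one_add_mul hn' (sqrt_nonneg _) ballMetric_nonneg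
    (le_of_abs_le (abs_sqrt_sub_sqrt_le_ballMetric hx hy))
  rw [Wmu, Wmu, div_le_iff₀ (rpow_pos_of_pos hy₀ _),
    ← mul_rpow (one_add_mul_ballMetric_nonneg n) hy₀.le]
  exact rpow_le_rpow (by positivity) (hkey.trans_eq (mul_comm _ _)) (by positivity)

/-- `W_μ(n;x)/W_μ(n;y) ≤ 2^μ (1 + n d(x,y))^{2μ}` for `x, y` in the ball. -/
theorem stmt_2 (d : ℕ) (μ : ℝ) (hμ : 0 ≤ μ) (n : ℕ) (hn : 0 < n)
    (x y : EuclideanSpace ℝ (Fin d)) (hx : ‖x‖ ≤ 1) (hy : ‖y‖ ≤ 1) :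
    Wmu μ n x / Wmu μ n y ≤ (2 : ℝ) ^ μ * (1 + n * ballMetric x y) ^ (2 * μ) :=
  (Wmu_div_Wmu_le hμ hn hx hy).trans <|
    le_mul_of_one_le_left (rpow_nonneg (one_add_mul_ballMetric_nonneg n) _)
      (one_le_rpow one_le_two hμ)
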